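/- Let B be an n×n matrix and A_H = I_{T+1} \otimes I_n - \Delta \otimes B. Then \|A_H^{-1}\| \leq \sqrt{\sum_{t=0}^{T} (T - t + 1) \|B^t\|^2}. Consequently, the condition number satisfies \kappa(A_H) \leq (\|B\| + 1) \sqrt{\sum_{t=0}^{T} (T - t + 1) \|B^t\|^2}. -/

import Mathlib

/-
`A_H = 1 - Δ ⊗ B` with `Δ` nilpotent, so `A_H⁻¹ = ∑_{t ≤ T} Δ^t ⊗ B^t`: its `(r, c)` block is
`B^(r-c)` on and below the diagonal and `0` above it. The operator norm of a block matrix is at most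
the operator norm of the real matrix of its block norms. For `A_H⁻¹` we bound the latter by its
Frobenius norm, in which `‖B^t‖²` is counted once for each of the `T - t + 1` entries of the `t`-th
subdiagonal; for `Δ ⊗ B` the matrix of block norms is `‖B‖ • Δ` and `‖Δ‖ ≤ 1`, whence
`‖A_H‖ ≤ 1 + ‖B‖`.
-/

open Kronecker

/-- The spectral (operator) norm of a complex matrix. -/
noncomputable def opNorm {m n : Type*} [Fintype m] [Fintype n] [DecidableEq n]
    (M : Matrix m n ℂ) : ℝ :=
  ‖LinearMap.toContinuousLinearMap (Matrix.toEuclideanLin M)‖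

open Matrix Finset WithLp
open scoped Matrix.Norms.L2Operator

theorem opNorm_eq_norm {m n : Type*} [Fintype m] [Fintype n] [DecidableEq n]
    (M : Matrix m n ℂ) : opNorm M = ‖M‖ :=
  rfl

namespace EuclideanSpace

variable {𝕜 : Type*} [RCLike 𝕜] {m k l : Type*} [Fintype m] [Fintype k] [Fintype l]

theorem norm_le_norm_of_forall_norm_le {x : EuclideanSpace 𝕜 m} {y : EuclideanSpace ℝ m}
    (h : ∀ i, ‖x i‖ ≤ y i) : ‖x‖ ≤ ‖y‖ := by
  have hsq : ‖x‖ ^ 2 ≤ ‖y‖ ^ 2 := by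
    simp only [EuclideanSpace.norm_sq_eq, Real.norm_eq_abs, sq_abs]
    exact sum_le_sum fun i _ => pow_le_pow_left₀ (norm_nonneg _) (h i) 2
  exact (pow_le_pow_iff_left₀ (norm_nonneg _) (norm_nonneg _) two_ne_zero).mp hsq

noncomputable def blockNorms (v : EuclideanSpace 𝕜 (k × l)) : EuclideanSpace ℝ k :=
  toLp 2 fun c => ‖toLp 2 fun j => v (c, j)‖

theorem norm_blockNorms (v : EuclideanSpace 𝕜 (k × l)) : ‖blockNorms v‖ = ‖v‖ := by
  have h : ‖blockNorms v‖ ^ 2 = ‖v‖ ^ 2 := by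
    simp only [blockNorms, EuclideanSpace.norm_sq_eq, norm_norm, Fintype.sum_prod_type]
  exact (sq_eq_sq₀ (norm_nonneg _) (norm_nonneg _)).mp h

end EuclideanSpace

open EuclideanSpace (blockNorms norm_blockNorms norm_le_norm_of_forall_norm_le)

namespace Matrix

theorem kronecker_submatrix_prodMk {α m n k l : Type*} [Mul α] (A : Matrix m k α)
    (B : Matrix n l α) (r : m) (c : k) :
    (A ⊗ₖ B).submatrix (Prod.mk r) (Prod.mk c) = A r c • B := by
  ext i j
  simp

theorem kronecker_pow {R m n : Type*} [CommSemiring R] [Fintype m] [Fintype n] [DecidableEq m]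
    [DecidableEq n] (A : Matrix m m R) (B : Matrix n n R) (k : ℕ) :
    (A ⊗ₖ B) ^ k = (A ^ k) ⊗ₖ (B ^ k) := by
  induction k with
  | zero => simp
  | succ k ih => rw [pow_succ, ih, pow_succ, pow_succ, mul_kronecker_mul]

theorem inv_one_sub_eq_sum_pow {R n : Type*} [CommRing R] [Fintype n] [DecidableEq n]
    {A : Matrix n n R} {k : ℕ} (hA : A ^ k = 0) : (1 - A)⁻¹ = ∑ i ∈ range k, A ^ i :=
  inv_eq_right_inv (by rw [mul_neg_geom_sum, hA, sub_zero])

section L2OpNorm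

variable {𝕜 : Type*} [RCLike 𝕜] {m n k l : Type*} [Fintype m] [Fintype n] [Fintype k] [Fintype l]

theorem l2_opNorm_le_bound [DecidableEq n] {A : Matrix m n 𝕜} {C : ℝ} (hC : 0 ≤ C)
    (h : ∀ x : EuclideanSpace 𝕜 n, ‖toLp 2 (A *ᵥ x)‖ ≤ C * ‖x‖) : ‖A‖ ≤ C :=
  ContinuousLinearMap.opNorm_le_bound _ hC h

theorem l2_opNorm_one_le [DecidableEq m] : ‖(1 : Matrix m m 𝕜)‖ ≤ 1 := by
  rw [← diagonal_one, l2_opNorm_diagonal]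
  exact (pi_norm_le_iff_of_nonneg zero_le_one).2 fun _ => by simp

theorem l2_opNorm_le_sqrt_sum_sq [DecidableEq n] (A : Matrix m n 𝕜) :
    ‖A‖ ≤ √(∑ i, ∑ j, ‖A i j‖ ^ 2) := by
  refine l2_opNorm_le_bound (Real.sqrt_nonneg _) fun x => ?_
  have hrow : ∀ i, ‖(A *ᵥ x) i‖ ^ 2 ≤ (∑ j, ‖A i j‖ ^ 2) * ‖x‖ ^ 2 := fun i =>
    calc ‖(A *ᵥ x) i‖ ^ 2 ≤ (∑ j, ‖A i j‖ * ‖x j‖) ^ 2 := by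
          refine pow_le_pow_left₀ (norm_nonneg _) ?_ 2
          simpa only [mulVec, dotProduct, norm_mul] using norm_sum_le univ fun j => A i j * x j
      _ ≤ (∑ j, ‖A i j‖ ^ 2) * ∑ j, ‖x j‖ ^ 2 := sum_mul_sq_le_sq_mul_sq _ _ _
      _ = (∑ j, ‖A i j‖ ^ 2) * ‖x‖ ^ 2 := by rw [EuclideanSpace.norm_sq_eq]
  calc ‖toLp 2 (A *ᵥ x)‖ = √(∑ i, ‖(A *ᵥ x) i‖ ^ 2) := EuclideanSpace.norm_eq _
    _ ≤ √(∑ i, (∑ j, ‖A i j‖ ^ 2) * ‖x‖ ^ 2) := Real.sqrt_le_sqrt (sum_le_sum fun i _ => hrow i)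
    _ = √(∑ i, ∑ j, ‖A i j‖ ^ 2) * ‖x‖ := by
      rw [← sum_mul, Real.sqrt_mul (by positivity), Real.sqrt_sq (norm_nonneg _)]

theorem l2_opNorm_le_l2_opNorm_norm_blocks [DecidableEq k] [DecidableEq l]
    (M : Matrix (m × n) (k × l) 𝕜) :
    ‖M‖ ≤ ‖(of fun r c => ‖M.submatrix (Prod.mk r) (Prod.mk c)‖ : Matrix m k ℝ)‖ := by
  set N : Matrix m k ℝ := of fun r c => ‖M.submatrix (Prod.mk r) (Prod.mk c)‖
  refine l2_opNorm_le_bound (norm_nonneg _) fun v => ?_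
  have hblock : ∀ r, toLp 2 (fun i => (M *ᵥ v) (r, i)) =
      ∑ c, toLp 2 (M.submatrix (Prod.mk r) (Prod.mk c) *ᵥ fun j => v (c, j)) := fun r => by
    ext i
    simp [mulVec, dotProduct, Fintype.sum_prod_type]
  have hrow : ∀ r, ‖blockNorms (toLp 2 (M *ᵥ v)) r‖ ≤ (N *ᵥ blockNorms v) r := fun r => by
    simp only [blockNorms, PiLp.toLp_apply, norm_norm]
    rw [hblock]
    refine (norm_sum_le _ _).trans (sum_le_sum fun c _ => ?_)
    exact l2_opNorm_mulVec _ (toLp 2 fun j => v (c, j))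
  calc ‖toLp 2 (M *ᵥ v)‖ = ‖blockNorms (toLp 2 (M *ᵥ v))‖ :=
        (norm_blockNorms _).symm
    _ ≤ ‖toLp 2 (N *ᵥ blockNorms v)‖ := norm_le_norm_of_forall_norm_le hrow
    _ ≤ ‖N‖ * ‖blockNorms v‖ := l2_opNorm_mulVec N _
    _ = ‖N‖ * ‖v‖ := by rw [norm_blockNorms]

theorem l2_opNorm_le_sqrt_sum_sq_blocks [DecidableEq k] [DecidableEq l]
    (M : Matrix (m × n) (k × l) 𝕜) :
    ‖M‖ ≤ √(∑ r, ∑ c, ‖M.submatrix (Prod.mk r) (Prod.mk c)‖ ^ 2) := by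
  simpa only [of_apply, norm_norm] using
    (l2_opNorm_le_l2_opNorm_norm_blocks M).trans (l2_opNorm_le_sqrt_sum_sq _)

theorem l2_opNorm_kronecker_le [DecidableEq k] [DecidableEq l] (A : Matrix m k 𝕜)
    (B : Matrix n l 𝕜) : ‖A ⊗ₖ B‖ ≤ ‖A.map (‖·‖)‖ * ‖B‖ := by
  have hblocks : (of fun r c => ‖(A ⊗ₖ B).submatrix (Prod.mk r) (Prod.mk c)‖ : Matrix m k ℝ) =
      ‖B‖ • A.map (‖·‖) := by
    ext r c
    simp [kronecker_submatrix_prodMk, norm_smul, mul_comm]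
  calc ‖A ⊗ₖ B‖ ≤ _ := l2_opNorm_le_l2_opNorm_norm_blocks _
    _ = ‖A.map (‖·‖)‖ * ‖B‖ := by
      rw [hblocks, norm_smul, Real.norm_of_nonneg (norm_nonneg _), mul_comm]

end L2OpNorm

end Matrix

def lowerShift (R : Type*) [Zero R] [One R] (N k : ℕ) : Matrix (Fin N) (Fin N) R :=
  of fun r c => if (r : ℕ) = c + k then 1 else 0

namespace lowerShift

variable {R : Type*} {N : ℕ}

theorem mul [NonAssocSemiring R] (k l : ℕ) :
    lowerShift R N k * lowerShift R N l = lowerShift R N (k + l) := by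
  ext r c
  simp only [lowerShift, mul_apply, of_apply, ite_mul, one_mul, zero_mul]
  rw [Fin.sum_univ_eq_sum_range (fun j => if (r : ℕ) = j + k then
      if j = (c : ℕ) + l then (1 : R) else 0 else 0), sum_eq_single ((c : ℕ) + l)]
  · simp only [if_true]
    exact if_congr (by omega) rfl rfl
  · intro j _ hj
    simp [hj]
  · intro h
    rw [mem_range] at h
    exact if_neg (by omega)

theorem one_pow [Semiring R] (k : ℕ) : lowerShift R N 1 ^ k = lowerShift R N k := by
  induction k with
  | zero =>
    ext r c
    simp [lowerShift, one_apply, Fin.ext_iff]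
  | succ k ih => rw [pow_succ, ih, mul]

theorem eq_zero_of_le [Zero R] [One R] {k : ℕ} (h : N ≤ k) : lowerShift R N k = 0 := by
  ext r c
  simp only [lowerShift, of_apply, Matrix.zero_apply]
  exact if_neg (by omega)

theorem map_norm {𝕜 : Type*} [RCLike 𝕜] (k : ℕ) :
    (lowerShift 𝕜 N k).map (‖·‖) = lowerShift ℝ N k := by
  ext r c
  simp only [lowerShift, map_apply, of_apply]
  split_ifs <;> simp

theorem l2_opNorm_le_one {𝕜 : Type*} [RCLike 𝕜] : ‖lowerShift 𝕜 N 1‖ ≤ 1 := by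
  cases N with
  | zero => simp [Subsingleton.elim (lowerShift 𝕜 0 1) 0]
  | succ N =>
    refine l2_opNorm_le_bound zero_le_one fun x => ?_
    have hzero : (lowerShift 𝕜 (N + 1) 1 *ᵥ x) 0 = 0 := by
      simp [lowerShift, mulVec, dotProduct]
    have hsucc : ∀ i : Fin N, (lowerShift 𝕜 (N + 1) 1 *ᵥ x) i.succ = x i.castSucc := by
      intro i
      simp only [lowerShift, mulVec, dotProduct, of_apply, Fin.val_succ, add_left_inj, ite_mul,
        one_mul, zero_mul]
      rw [sum_eq_single i.castSucc (fun j _ hj => if_neg fun h => hj (Fin.ext h.symm)) (by simp)]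
      simp
    have hsq : ‖toLp 2 (lowerShift 𝕜 (N + 1) 1 *ᵥ x)‖ ^ 2 ≤ ‖x‖ ^ 2 := by
      rw [EuclideanSpace.norm_sq_eq, EuclideanSpace.norm_sq_eq, Fin.sum_univ_succ,
        Fin.sum_univ_castSucc (fun i => ‖x i‖ ^ 2)]
      simp only [hzero, hsucc, norm_zero]
      linarith [sq_nonneg ‖x (Fin.last N)‖]
    rw [one_mul]
    exact (pow_le_pow_iff_left₀ (norm_nonneg _) (norm_nonneg _) two_ne_zero).mp hsq

end lowerShift

theorem sum_range_ite_eq_add {M : Type*} [AddCommMonoid M] (f : ℕ → M) {N r : ℕ} (c : ℕ)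
    (hr : r < N) :
    ∑ t ∈ range N, (if r = c + t then f t else 0) = if c ≤ r then f (r - c) else 0 := by
  split_ifs with hcr
  · rw [sum_eq_single (r - c) (fun t _ ht => if_neg (by omega)) (by simp; omega)]
    exact if_pos (by omega)
  · exact sum_eq_zero fun t _ => if_neg (by omega)

theorem sum_fin_sum_fin_sum_range_ite_eq_add (N : ℕ) (a : ℕ → ℝ) :
    ∑ r : Fin N, ∑ c : Fin N, ∑ t ∈ range N, (if (r : ℕ) = c + t then a t else 0) =
      ∑ t ∈ range N, ((N : ℝ) - t) * a t := by
  have hdiag : ∀ t ∈ range N,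
      ∑ r : Fin N, ∑ c : Fin N, (if (r : ℕ) = c + t then a t else 0) = ((N : ℝ) - t) * a t := by
    intro t ht
    -- the `t`-th subdiagonal of an `N × N` matrix has `N - t` entries
    have hcount : (range N).filter (fun c => c + t ∈ range N) = range (N - t) := by
      ext c
      simp only [mem_filter, mem_range]
      omega
    have hcol : ∀ c : Fin N, ∑ r : Fin N, (if (r : ℕ) = c + t then a t else 0) =
        if (c : ℕ) + t ∈ range N then a t else 0 := fun c => by
      rw [Fin.sum_univ_eq_sum_range (fun r => if r = (c : ℕ) + t then a t else 0), sum_ite_eq']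
    rw [sum_comm, sum_congr rfl fun c _ => hcol c,
      Fin.sum_univ_eq_sum_range (fun c => if c + t ∈ range N then a t else 0), ← sum_filter,
      hcount, sum_const, card_range, nsmul_eq_mul, Nat.cast_sub (mem_range.mp ht).le]
  calc _ = ∑ r : Fin N, ∑ t ∈ range N, ∑ c : Fin N, (if (r : ℕ) = c + t then a t else 0) :=
        sum_congr rfl fun r _ => sum_comm
    _ = _ := sum_comm
    _ = _ := sum_congr rfl hdiag

theorem sum_sq_norm_blocks_sum_lowerShift_kronecker {𝕜 n l : Type*} [RCLike 𝕜] [Fintype n]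
    [Fintype l] [DecidableEq l] (N : ℕ) (f : ℕ → Matrix n l 𝕜) :
    ∑ r, ∑ c, ‖(∑ t ∈ range N, lowerShift 𝕜 N t ⊗ₖ f t).submatrix (Prod.mk r) (Prod.mk c)‖ ^ 2 =
      ∑ t ∈ range N, ((N : ℝ) - t) * ‖f t‖ ^ 2 := by
  have hblock : ∀ r c : Fin N,
      (∑ t ∈ range N, lowerShift 𝕜 N t ⊗ₖ f t).submatrix (Prod.mk r) (Prod.mk c) =
        ∑ t ∈ range N, if (r : ℕ) = c + t then f t else 0 := by
    intro r c
    ext i j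
    simp only [submatrix_apply, Matrix.sum_apply, kronecker_apply, lowerShift, of_apply]
    refine sum_congr rfl fun t _ => ?_
    split_ifs <;> simp
  have hnorm : ∀ r c : Fin N, ‖∑ t ∈ range N, if (r : ℕ) = c + t then f t else 0‖ ^ 2 =
      ∑ t ∈ range N, if (r : ℕ) = c + t then ‖f t‖ ^ 2 else 0 := by
    intro r c
    rw [sum_range_ite_eq_add _ _ r.isLt, sum_range_ite_eq_add _ _ r.isLt]
    split_ifs <;> simp
  simp only [hblock, hnorm]
  exact sum_fin_sum_fin_sum_range_ite_eq_add N _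

/-- **Upper bound on the condition number of `A_H`.** For `A_H = I_{T+1} ⊗ I_n - Δ ⊗ B`,
`‖A_H⁻¹‖ ≤ √(∑_{t=0}^{T} (T - t + 1)·‖B^t‖²)`, and consequently
`κ(A_H) = ‖A_H‖·‖A_H⁻¹‖ ≤ (‖B‖ + 1)·√(∑_{t=0}^{T} (T - t + 1)·‖B^t‖²)`. -/
theorem condition_number_upper_bound (n T : ℕ) (B : Matrix (Fin n) (Fin n) ℂ)
    (Δ : Matrix (Fin (T + 1)) (Fin (T + 1)) ℂ)
    (hΔ : Δ = Matrix.of fun r c : Fin (T + 1) => if (r : ℕ) = (c : ℕ) + 1 then (1 : ℂ) else 0)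
    (AH : Matrix (Fin (T + 1) × Fin n) (Fin (T + 1) × Fin n) ℂ)
    (hAH : AH = 1 - Δ ⊗ₖ B) :
    opNorm AH⁻¹ ≤
        Real.sqrt (∑ t ∈ Finset.range (T + 1), ((T : ℝ) - t + 1) * opNorm (B ^ t) ^ 2) ∧
      opNorm AH * opNorm AH⁻¹ ≤
        (opNorm B + 1) *
          Real.sqrt (∑ t ∈ Finset.range (T + 1), ((T : ℝ) - t + 1) * opNorm (B ^ t) ^ 2) := by
  simp only [opNorm_eq_norm]
  replace hΔ : Δ = lowerShift ℂ (T + 1) 1 := hΔ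
  have hpow : ∀ t, (Δ ⊗ₖ B) ^ t = lowerShift ℂ (T + 1) t ⊗ₖ (B ^ t) := fun t => by
    rw [kronecker_pow, hΔ, lowerShift.one_pow]
  have hinv : AH⁻¹ = ∑ t ∈ range (T + 1), lowerShift ℂ (T + 1) t ⊗ₖ (B ^ t) := by
    rw [hAH, inv_one_sub_eq_sum_pow (k := T + 1)
      (by rw [hpow, lowerShift.eq_zero_of_le le_rfl, zero_kronecker])]
    exact sum_congr rfl fun t _ => hpow t
  have hinvBound : ‖AH⁻¹‖ ≤ √(∑ t ∈ range (T + 1), ((T : ℝ) - t + 1) * ‖B ^ t‖ ^ 2) := by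
    refine (l2_opNorm_le_sqrt_sum_sq_blocks _).trans_eq ?_
    rw [hinv, sum_sq_norm_blocks_sum_lowerShift_kronecker]
    congr 1
    refine sum_congr rfl fun t _ => ?_
    push_cast
    ring
  have hAHBound : ‖AH‖ ≤ ‖B‖ + 1 :=
    calc ‖AH‖ ≤ ‖(1 : Matrix (Fin (T + 1) × Fin n) (Fin (T + 1) × Fin n) ℂ)‖ + ‖Δ ⊗ₖ B‖ := by
          rw [hAH]
          exact norm_sub_le _ _
      _ ≤ 1 + ‖lowerShift ℝ (T + 1) 1‖ * ‖B‖ := by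
          rw [← lowerShift.map_norm (𝕜 := ℂ), ← hΔ]
          exact add_le_add l2_opNorm_one_le (l2_opNorm_kronecker_le _ _)
      _ ≤ 1 + 1 * ‖B‖ := by gcongr; exact lowerShift.l2_opNorm_le_one
      _ = ‖B‖ + 1 := by ring
  exact ⟨hinvBound, mul_le_mul hAHBound hinvBound (norm_nonneg _) (by positivity)⟩
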